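/- arXiv:cs/0411076 — 2 statements merged into one kernel-verified Lean document; each statement's English description precedes it below -/
import Mathlib

section
/- Let 0 ≤ a < m < n be integers and suppose F(a,m,n) = 0. Then F(a, m+1, n) ≠ 0, where F(a,m,n) = Σ_{j=0}^{a} Σ_{k=0}^{j} C(m,k)·C(n−m, j−k)·(−1)^k. -/
open Finset

/-- `F(a,m,n) = Σ_{j=0}^a Σ_{k=0}^j C(m,k) C(n-m,j-k) (-1)^k`. -/
def FZ (a m n : ℕ) : ℤ :=
  ∑ j ∈ range (a + 1), ∑ k ∈ range (j + 1),
    (m.choose k : ℤ) * ((n - m).choose (j - k)) * (-1) ^ k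

open Polynomial

/-- `(1-X)^p (1+X)^q` over `ℤ`. -/
noncomputable def Pl (p q : ℕ) : Polynomial ℤ := (1 - X) ^ p * (1 + X) ^ q

lemma coeff_one_sub_X_pow (m k : ℕ) :
    ((1 - (X : ℤ[X])) ^ m).coeff k = (-1) ^ k * m.choose k := by
  have h : (1 - (X : ℤ[X])) ^ m = C ((-1 : ℤ) ^ m) * (X + C (-1)) ^ m := by
    rw [map_pow, ← mul_pow]
    congr 1
    simp only [map_neg, C_1]
    ring
  rw [h, coeff_C_mul, coeff_X_add_C_pow]
  rcases le_or_gt k m with hk | hk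
  · have h2 : m + (m - k) = k + 2 * (m - k) := by omega
    have : ((-1 : ℤ) ^ m) * (-1) ^ (m - k) = (-1) ^ k := by
      rw [← pow_add, h2, pow_add, pow_mul]
      simp
    rw [← mul_assoc, this]
  · rw [Nat.choose_eq_zero_of_lt hk]
    simp

lemma sum_coeff_one_sub_mul (S : ℤ[X]) (a : ℕ) :
    ∑ j ∈ range (a + 1), ((1 - X) * S).coeff j = S.coeff a := by
  induction a with
  | zero => simp [mul_coeff_zero]
  | succ a ih =>
    rw [Finset.sum_range_succ, ih]
    have h : ((1 - X) * S).coeff (a + 1) = S.coeff (a + 1) - S.coeff a := by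
      rw [sub_mul, one_mul, coeff_sub, coeff_X_mul]
    rw [h]; ring

lemma FZ_eq_coeff (a s u : ℕ) : FZ a (s + 1) (s + 1 + u) = (Pl s u).coeff a := by
  have key : ∀ j, ∑ k ∈ range (j + 1),
      ((s + 1).choose k : ℤ) * (((s + 1 + u) - (s + 1)).choose (j - k)) * (-1) ^ k
      = ((1 - X) * Pl s u).coeff j := by
    intro j
    have hn : (s + 1 + u) - (s + 1) = u := by omega
    have hP : (1 - X) * Pl s u = (1 - X) ^ (s + 1) * (1 + X) ^ u := by
      rw [Pl]; ring
    rw [hn, hP, coeff_mul, Finset.Nat.sum_antidiagonal_eq_sum_range_succ_mk]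
    refine Finset.sum_congr rfl fun k _ => ?_
    rw [coeff_one_sub_X_pow, coeff_one_add_X_pow]
    ring
  rw [FZ, Finset.sum_congr rfl fun j _ => key j]
  exact sum_coeff_one_sub_mul _ a

lemma one_sub_mul_derivative (p : ℕ) :
    (1 - (X : ℤ[X])) * derivative ((1 - X) ^ p) = C (-(p : ℤ)) * (1 - X) ^ p := by
  rcases p with _ | p
  · simp
  · rw [derivative_pow_succ]
    have hd : derivative (1 - (X : ℤ[X])) = -1 := by
      rw [derivative_sub, derivative_one, derivative_X]; ring
    rw [hd]
    simp only [Nat.cast_add, Nat.cast_one, map_neg, map_add, map_one]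
    ring

lemma one_add_mul_derivative (q : ℕ) :
    (1 + (X : ℤ[X])) * derivative ((1 + X) ^ q) = C ((q : ℤ)) * (1 + X) ^ q := by
  rcases q with _ | q
  · simp
  · rw [derivative_pow_succ]
    have hd : derivative (1 + (X : ℤ[X])) = 1 := by
      rw [derivative_add, derivative_one, derivative_X]; ring
    rw [hd]
    simp only [Nat.cast_add, Nat.cast_one, map_add, map_one]
    ring

lemma pl_deriv_id (s t : ℕ) :
    (1 - X ^ 2) * derivative (Pl s t)
      = (C ((t : ℤ) - s) - C ((s : ℤ) + t) * X) * Pl s t := by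
  rw [Pl, derivative_mul]
  have h1 := one_sub_mul_derivative s
  have h2 := one_add_mul_derivative t
  have hC : C ((t : ℤ) - s) - C ((s : ℤ) + t) * X
      = C (-(s : ℤ)) * (1 + X) + C ((t : ℤ)) * (1 - X) := by
    simp only [map_sub, map_add, map_neg]
    ring
  rw [hC]
  linear_combination ((1 + X) ^ t * (1 + X)) * h1 + ((1 - X) ^ s * (1 - X)) * h2

lemma coeff_rec (s t b : ℕ) :
    ((b : ℤ) + 2) * (Pl s t).coeff (b + 2) + ((s : ℤ) - t) * (Pl s t).coeff (b + 1)
      + ((s : ℤ) + t - b) * (Pl s t).coeff b = 0 := by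
  have h := congrArg (fun P => P.coeff (b + 1)) (pl_deriv_id s t)
  set R := Pl s t with hR
  have hL : ((1 - X ^ 2) * derivative R).coeff (b + 1)
      = ((b : ℤ) + 2) * R.coeff (b + 2) - (b : ℤ) * R.coeff b := by
    rw [sub_mul, one_mul, coeff_sub, coeff_derivative]
    rcases b with _ | c
    · have h0 : ((X ^ 2 * derivative R).coeff 1) = 0 := by
        rw [coeff_X_pow_mul']
        simp
      rw [h0]
      push_cast; ring
    · have h0 : ((X ^ 2 * derivative R).coeff (c + 1 + 1)) = R.coeff (c + 1) * ((c : ℤ) + 1) := by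
        rw [show c + 1 + 1 = c + 2 from rfl, coeff_X_pow_mul, coeff_derivative]
      rw [h0]
      push_cast; ring
  have hRt : ((C ((t : ℤ) - s) - C ((s : ℤ) + t) * X) * R).coeff (b + 1)
      = ((t : ℤ) - s) * R.coeff (b + 1) - ((s : ℤ) + t) * R.coeff b := by
    rw [sub_mul, coeff_sub, coeff_C_mul, mul_assoc, coeff_C_mul, coeff_X_mul]
  rw [hL, hRt] at h
  linarith [h]

lemma coeff_comb (R : ℤ[X]) (c0 c1 c2 : ℤ) (b : ℕ) :
    ((C c0 + C c1 * X + C c2 * X ^ 2) * R).coeff (b + 2)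
      = c0 * R.coeff (b + 2) + c1 * R.coeff (b + 1) + c2 * R.coeff b := by
  rw [add_mul, add_mul, coeff_add, coeff_add, coeff_C_mul, mul_assoc, coeff_C_mul,
    show b + 2 = (b + 1) + 1 from rfl, coeff_X_mul, mul_assoc, coeff_C_mul,
    show b + 1 + 1 = b + 2 from rfl, coeff_X_pow_mul]

lemma three_term (s t b : ℕ) :
    ((t : ℤ) + 1) * (Pl (s + 2) t).coeff (b + 2) + ((s : ℤ) + 1) * (Pl s (t + 2)).coeff (b + 2)
      = ((s : ℤ) + t + 2 - 2 * ((b : ℤ) + 2)) * (Pl (s + 1) (t + 1)).coeff (b + 2) := by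
  have e1 : Pl (s + 2) t = (C (1 : ℤ) + C (-2 : ℤ) * X + C (1 : ℤ) * X ^ 2) * Pl s t := by
    rw [Pl, Pl]
    simp only [map_neg, map_one, map_ofNat, C_1]
    ring
  have e2 : Pl s (t + 2) = (C (1 : ℤ) + C (2 : ℤ) * X + C (1 : ℤ) * X ^ 2) * Pl s t := by
    rw [Pl, Pl]
    simp only [map_one, map_ofNat, C_1]
    ring
  have e3 : Pl (s + 1) (t + 1) = (C (1 : ℤ) + C (0 : ℤ) * X + C (-1 : ℤ) * X ^ 2) * Pl s t := by
    rw [Pl, Pl]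
    simp only [map_neg, map_one, map_zero, C_1]
    ring
  rw [e1, e2, e3, coeff_comb, coeff_comb, coeff_comb]
  have h := coeff_rec s t b
  linear_combination 2 * h

lemma down (b : ℕ) : ∀ s t : ℕ, (Pl s (t + 1)).coeff (b + 2) = 0 →
    (Pl (s + 1) t).coeff (b + 2) = 0 → (Pl 0 (s + t + 1)).coeff (b + 2) = 0 := by
  intro s
  induction s with
  | zero =>
    intro t h1 _
    simpa using h1
  | succ s ih =>
    intro t h1 h2
    have h3 : (Pl s (t + 2)).coeff (b + 2) = 0 := by
      have ht := three_term s t b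
      have h2' : (Pl (s + 2) t).coeff (b + 2) = 0 := h2
      rw [h2', h1] at ht
      have hs : ((s : ℤ) + 1) ≠ 0 := by positivity
      have hz : ((s : ℤ) + 1) * (Pl s (t + 2)).coeff (b + 2) = 0 := by linear_combination ht
      exact (mul_eq_zero.mp hz).resolve_left hs
    have h4 := ih (t + 1) h3 h1
    have : s + (t + 1) + 1 = s + 1 + t + 1 := by omega
    rwa [this] at h4

/-- For `0 ≤ a < m < n`, if `F(a,m,n) = 0` then `F(a,m+1,n) ≠ 0`. -/
theorem stmt_16 (a m n : ℕ) (ham : a < m) (hmn : m < n) (h : FZ a m n = 0) :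
    FZ a (m + 1) n ≠ 0 := by
  intro h2
  rcases a with _ | a
  · simp [FZ] at h
  rcases a with _ | b
  · -- a = 1
    simp only [FZ, Finset.sum_range_succ, Finset.sum_range_zero] at h h2
    simp [Nat.choose_one_right] at h h2
    omega
  · -- a = b + 2
    obtain ⟨s, rfl⟩ : ∃ s, m = s + 1 := ⟨m - 1, by omega⟩
    obtain ⟨t, rfl⟩ : ∃ t, n = s + 1 + (t + 1) := ⟨n - s - 2, by omega⟩
    have hA : (Pl s (t + 1)).coeff (b + 2) = 0 := by
      rw [← FZ_eq_coeff]; exact h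
    have hB : (Pl (s + 1) t).coeff (b + 2) = 0 := by
      have := FZ_eq_coeff (b + 2) (s + 1) t
      rw [show s + 1 + 1 + t = s + 1 + (t + 1) from by omega] at this
      rw [← this]; exact h2
    have h0 := down b s t hA hB
    have hPl0 : (Pl 0 (s + t + 1)).coeff (b + 2) = ((s + t + 1).choose (b + 2) : ℤ) := by
      rw [Pl, pow_zero, one_mul, coeff_one_add_X_pow]
    rw [hPl0] at h0
    have hle : b + 2 ≤ s + t + 1 := by omega
    have := Nat.choose_pos hle
    omega
end

section
/- For any 0 ≤ a ≤ n, the rank over ℝ of the matrix M_{=a} (with (x,y) entry 1 if HAM(x,y)=a, else 0) equals the number of strings z ∈ {0,1}^n whose number of ones m satisfies f(a,n,m) ≠ 0, i.e., rank(M_{=a}) = Σ_{m : f(a,n,m) ≠ 0} C(n,m). -/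
open Finset

/-- `f(a,n,m) = Σ_{k=0}^a C(m,k) C(n-m,a-k) (-1)^k`. -/
def fZ (a n m : ℕ) : ℤ :=
  ∑ k ∈ range (a + 1), (m.choose k : ℤ) * ((n - m).choose (a - k)) * (-1) ^ k

namespace Stmt17aux
open Polynomial
variable {n : ℕ}

def wt {n : ℕ} (x : Fin n → Bool) : ℕ := (univ.filter fun i => x i = true).card

lemma wt_le (x : Fin n → Bool) : wt x ≤ n := by
  simpa [wt] using (Finset.card_filter_le univ (fun i => x i = true))

lemma card_wt (m : ℕ) :
    (univ.filter fun S : Fin n → Bool => wt S = m).card = n.choose m := by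
  have : (univ.filter fun S : Fin n → Bool => wt S = m).card
      = (Finset.powersetCard m (univ : Finset (Fin n))).card := by
    exact Finset.card_nbij' (fun S => univ.filter fun i => S i = true)
      (fun T i => decide (i ∈ T))
      (by intro S hS; simp only [Finset.mem_coe, Finset.mem_filter, Finset.mem_univ, true_and] at hS
          simpa [Finset.mem_powersetCard_univ, wt] using hS)
      (by intro T hT; simp only [Finset.mem_coe, Finset.mem_powersetCard_univ] at hT
          refine Finset.mem_filter.mpr ⟨Finset.mem_univ _, ?_⟩
          simp only [Finset.coe_filter, Set.mem_setOf_eq, Finset.mem_coe, Finset.mem_filter, Finset.mem_univ, true_and, wt]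
          rw [← hT]; congr 1; ext i; simp)
      (by intro S hS; funext i; simp)
      (by intro T hT; ext i; simp)
  rw [this, Finset.card_powersetCard, Finset.card_univ, Fintype.card_fin]

lemma coeff_one_sub_X_pow (j k : ℕ) :
    ((1 - X : Polynomial ℝ) ^ j).coeff k = (-1) ^ k * j.choose k := by
  have h : (1 - X : Polynomial ℝ) ^ j = ∑ i ∈ range (j + 1),
      C ((-1 : ℝ) ^ i * j.choose i) * X ^ i := by
    have h2 := add_pow (-X : Polynomial ℝ) 1 j
    rw [neg_add_eq_sub] at h2
    rw [h2]
    refine Finset.sum_congr rfl fun i _ => ?_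
    have : (-X : Polynomial ℝ) ^ i = C ((-1 : ℝ) ^ i) * X ^ i := by
      rw [neg_pow]; simp [map_pow]
    rw [this]
    simp only [one_pow, map_mul, map_pow, map_natCast]
    ring
  rw [h, finset_sum_coeff]
  simp only [coeff_C_mul, coeff_X_pow]
  rw [Finset.sum_eq_single k]
  · by_cases hk : k ≤ j
    · simp
    · rw [Nat.choose_eq_zero_of_lt (Nat.not_le.mp hk)]; simp
  · intro b _ hb; simp [hb.symm]
  · intro hk
    simp only [Finset.mem_range, not_lt] at hk
    rw [Nat.choose_eq_zero_of_lt (by omega)]; simp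

lemma wt_eq_sum (z : Fin n → Bool) : wt z = ∑ i, (if z i = true then 1 else 0) := by
  rw [wt, Finset.card_filter]

lemma prod_eq_sum (S : Fin n → Bool) :
    (1 - X : Polynomial ℝ) ^ (wt S) * (1 + X) ^ (n - wt S)
      = ∑ z : Fin n → Bool, C (∏ i, (if z i && S i then (-1 : ℝ) else 1)) * X ^ (wt z) := by
  have way2 : ∏ i : Fin n, ((if S i = true then (1 - X : Polynomial ℝ) else (1 + X)))
      = ∑ z : Fin n → Bool, C (∏ i, (if z i && S i then (-1 : ℝ) else 1)) * X ^ (wt z) := by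
    have percoord : ∀ i : Fin n,
        (if S i = true then (1 - X : Polynomial ℝ) else (1 + X))
        = ∑ b : Bool, C (if b && S i then (-1 : ℝ) else 1) * X ^ (if b = true then 1 else 0) := by
      intro i
      cases hS : S i <;> simp [Fintype.sum_bool] <;> ring
    calc ∏ i : Fin n, ((if S i = true then (1 - X : Polynomial ℝ) else (1 + X)))
        = ∏ i : Fin n, ∑ b ∈ (univ : Finset Bool),
            C (if b && S i then (-1 : ℝ) else 1) * X ^ (if b = true then 1 else 0) := by
          exact Finset.prod_congr rfl fun i _ => percoord i
      _ = ∑ z ∈ Fintype.piFinset (fun _ : Fin n => (univ : Finset Bool)),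
            ∏ i, C (if z i && S i then (-1 : ℝ) else 1) * X ^ (if z i = true then 1 else 0) := by
          rw [Finset.prod_univ_sum]
      _ = ∑ z : Fin n → Bool, C (∏ i, (if z i && S i then (-1 : ℝ) else 1)) * X ^ (wt z) := by
          rw [Fintype.piFinset_univ]
          refine Finset.sum_congr rfl fun z _ => ?_
          rw [Finset.prod_mul_distrib, ← map_prod, Finset.prod_pow_eq_pow_sum, ← wt_eq_sum]
  have way1 : ∏ i : Fin n, ((if S i = true then (1 - X : Polynomial ℝ) else (1 + X)))
      = (1 - X : Polynomial ℝ) ^ (wt S) * (1 + X) ^ (n - wt S) := by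
    have hc : (univ.filter fun i => ¬ S i = true).card = n - wt S := by
      have := Finset.card_filter_add_card_filter_not (s := (univ : Finset (Fin n)))
        (p := fun i => S i = true)
      simp only [Finset.card_univ, Fintype.card_fin] at this
      rw [wt]; omega
    rw [Finset.prod_ite, Finset.prod_const, Finset.prod_const, hc, wt]
  rw [← way1, way2]

lemma kraw (a : ℕ) (S : Fin n → Bool) :
    ∑ z : Fin n → Bool, (if wt z = a then (∏ i, (if z i && S i then (-1 : ℝ) else 1)) else 0)
      = (fZ a n (wt S) : ℝ) := by
  have h := congrArg (fun p => Polynomial.coeff p a) (prod_eq_sum S)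
  simp only [finset_sum_coeff, coeff_C_mul, coeff_X_pow] at h
  rw [coeff_mul] at h
  rw [Finset.Nat.sum_antidiagonal_eq_sum_range_succ_mk] at h
  simp only [coeff_one_sub_X_pow, coeff_one_add_X_pow] at h
  have hL : ∑ z : Fin n → Bool, (if wt z = a then (∏ i, (if z i && S i then (-1 : ℝ) else 1)) else 0)
      = ∑ z : Fin n → Bool, (∏ i, (if z i && S i then (-1 : ℝ) else 1)) * (if a = wt z then 1 else 0) := by
    refine Finset.sum_congr rfl fun z _ => ?_
    by_cases hz : wt z = a
    · rw [if_pos hz, if_pos hz.symm, mul_one]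
    · rw [if_neg hz, if_neg (fun h => hz h.symm), mul_zero]
  rw [hL, ← h, fZ]
  push_cast
  refine Finset.sum_congr rfl fun k _ => ?_
  ring

noncomputable def Hm (n : ℕ) : Matrix (Fin n → Bool) (Fin n → Bool) ℝ :=
  Matrix.of fun x y => ∏ i, (if x i && y i then (-1 : ℝ) else 1)

lemma sum_char (x : Fin n → Bool) :
    ∑ y : Fin n → Bool, (∏ i, (if x i && y i then (-1 : ℝ) else 1))
      = if x = (fun _ => false) then (2 : ℝ) ^ n else 0 := by
  rw [← Fintype.piFinset_univ,
    Finset.sum_prod_piFinset (univ : Finset Bool) (fun i b => if x i && b then (-1:ℝ) else 1)]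
  have percoord : ∀ i : Fin n, (∑ b ∈ (univ : Finset Bool), (if x i && b then (-1 : ℝ) else 1))
      = if x i = true then 0 else 2 := by
    intro i; cases hx : x i <;> simp [Fintype.sum_bool] <;> norm_num
  rw [Finset.prod_congr rfl fun i _ => percoord i]
  by_cases hx : x = fun _ => false
  · rw [if_pos hx]
    subst hx
    simp
  · rw [if_neg hx]
    obtain ⟨i, hi⟩ : ∃ i, x i = true := by
      by_contra h
      push_neg at h
      exact hx (funext fun i => by simpa using h i)
    exact Finset.prod_eq_zero (Finset.mem_univ i) (by rw [if_pos hi])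

lemma Hm_mul_Hm : Hm n * Hm n = ((2 : ℝ) ^ n) • (1 : Matrix (Fin n → Bool) (Fin n → Bool) ℝ) := by
  ext x y
  simp only [Matrix.mul_apply, Hm, Matrix.of_apply, Matrix.smul_apply, Matrix.one_apply]
  have key : ∀ z : Fin n → Bool,
      (∏ i, (if x i && z i then (-1 : ℝ) else 1)) * (∏ i, (if z i && y i then (-1 : ℝ) else 1))
      = ∏ i, (if (fun j => xor (x j) (y j)) i && z i then (-1 : ℝ) else 1) := by
    intro z
    rw [← Finset.prod_mul_distrib]
    refine Finset.prod_congr rfl fun i _ => ?_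
    cases hx : x i <;> cases hy : y i <;> cases hz : z i <;> simp [hx, hy, hz]
  rw [Finset.sum_congr rfl (fun z _ => key z), sum_char]
  have hiff : ((fun j => xor (x j) (y j)) = (fun _ => false)) ↔ x = y := by
    simp only [funext_iff]
    constructor
    · intro h i; have := h i; revert this; cases x i <;> cases y i <;> simp
    · intro h i; have := h i; revert this; cases x i <;> cases y i <;> simp
  by_cases hxy : x = y
  · rw [if_pos (hiff.mpr hxy), if_pos hxy, smul_eq_mul, mul_one]
  · rw [if_neg (fun h => hxy (hiff.mp h)), if_neg hxy, smul_eq_mul, mul_zero]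

lemma isUnit_det_Hm : IsUnit (Hm n).det := by
  have h := congrArg Matrix.det (Hm_mul_Hm (n := n))
  rw [Matrix.det_mul, Matrix.det_smul, Matrix.det_one, mul_one] at h
  refine isUnit_iff_ne_zero.mpr fun h0 => ?_
  rw [h0, mul_zero] at h
  have : ((2:ℝ)^n)^(Fintype.card (Fin n → Bool)) ≠ 0 := by positivity
  exact this h.symm

lemma chi_xor (a b c : Bool) :
    (if (xor a b) && c then (-1:ℝ) else 1)
      = (if a && c then (-1:ℝ) else 1) * (if b && c then (-1:ℝ) else 1) := by
  cases a <;> cases b <;> cases c <;> norm_num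

lemma ne_xor (a b : Bool) : (a ≠ xor a b) ↔ b = true := by
  cases a <;> cases b <;> simp

lemma mul_Hm_eq (a : ℕ) :
    (Matrix.of (fun x y : Fin n → Bool =>
        if hammingDist x y = a then (1 : ℝ) else 0)) * Hm n
      = Hm n * Matrix.diagonal (fun S => (fZ a n (wt S) : ℝ)) := by
  ext x S
  rw [Matrix.mul_apply, Matrix.mul_diagonal]
  have e : Function.Involutive (fun z : Fin n → Bool => fun i => xor (x i) (z i)) := by
    intro z; funext i; cases hx : x i <;> cases hz : z i <;> simp [hx, hz]
  set p := Function.Involutive.toPerm _ e with hp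
  have hsum := Equiv.sum_comp p
    (fun y => (Matrix.of (fun x y : Fin n → Bool =>
        if hammingDist x y = a then (1 : ℝ) else 0)) x y * Hm n y S)
  rw [← hsum]
  have step : ∀ z : Fin n → Bool,
      (Matrix.of (fun x y : Fin n → Bool =>
        if hammingDist x y = a then (1 : ℝ) else 0)) x (p z) * Hm n (p z) S
      = (if wt z = a then (∏ i, (if x i && S i then (-1:ℝ) else 1))
          * (∏ i, (if z i && S i then (-1:ℝ) else 1)) else 0) := by
    intro z
    have hperm : (p z : Fin n → Bool) = fun i => xor (x i) (z i) := rfl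
    rw [hperm]
    have hdist : hammingDist x (fun i => xor (x i) (z i)) = wt z := by
      rw [hammingDist, wt]
      congr 1
      ext i
      simp only [Finset.mem_filter, Finset.mem_univ, true_and]
      exact ne_xor (x i) (z i)
    have hchi : (Hm n) (fun i => xor (x i) (z i)) S
        = (∏ i, (if x i && S i then (-1:ℝ) else 1)) * (∏ i, (if z i && S i then (-1:ℝ) else 1)) := by
      simp only [Hm, Matrix.of_apply]
      rw [← Finset.prod_mul_distrib]
      exact Finset.prod_congr rfl fun i _ => chi_xor (x i) (z i) (S i)
    rw [hchi, Matrix.of_apply, hdist]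
    by_cases hz : wt z = a
    · rw [if_pos hz, if_pos hz, one_mul]
    · rw [if_neg hz, if_neg hz, zero_mul]
  rw [Finset.sum_congr rfl (fun z _ => step z)]
  have : ∑ z : Fin n → Bool, (if wt z = a then (∏ i, (if x i && S i then (-1:ℝ) else 1))
          * (∏ i, (if z i && S i then (-1:ℝ) else 1)) else 0)
      = (∏ i, (if x i && S i then (-1:ℝ) else 1))
        * ∑ z : Fin n → Bool, (if wt z = a then (∏ i, (if z i && S i then (-1:ℝ) else 1)) else 0) := by
    rw [Finset.mul_sum]
    refine Finset.sum_congr rfl fun z _ => ?_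
    by_cases hz : wt z = a
    · rw [if_pos hz, if_pos hz]
    · rw [if_neg hz, if_neg hz, mul_zero]
  rw [this, kraw]
  rfl

lemma countEq (a : ℕ) :
    Fintype.card {S : Fin n → Bool // fZ a n (wt S) ≠ 0}
      = ∑ m ∈ (range (n + 1)).filter (fun m => fZ a n m ≠ 0), n.choose m := by
  rw [Fintype.card_subtype]
  rw [Finset.card_eq_sum_card_fiberwise (f := wt)
    (t := (range (n+1)).filter fun m => fZ a n m ≠ 0)
    (fun S hS => by
      simp only [Finset.coe_filter, Set.mem_setOf_eq, Finset.mem_coe, Finset.mem_filter, Finset.mem_univ, true_and] at hS ⊢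
      exact ⟨Finset.mem_range.mpr (Nat.lt_succ_of_le (wt_le S)), hS⟩)]
  refine Finset.sum_congr rfl fun m hm => ?_
  simp only [Finset.mem_filter, Finset.mem_range] at hm
  rw [Finset.filter_filter]
  have hset : (univ.filter fun S : Fin n → Bool => fZ a n (wt S) ≠ 0 ∧ wt S = m)
      = univ.filter fun S : Fin n → Bool => wt S = m := by
    refine Finset.filter_congr fun S _ => ?_
    constructor
    · exact And.right
    · intro h; exact ⟨h ▸ hm.2, h⟩
  rw [hset, card_wt]

end Stmt17aux

open Stmt17aux in
/-- The rank over `ℝ` of `M_{=a}` equals `Σ_{m : f(a,n,m) ≠ 0} C(n,m)`. -/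
theorem stmt_17 (n a : ℕ) (ha : a ≤ n) :
    (Matrix.of (fun x y : Fin n → Bool =>
        if hammingDist x y = a then (1 : ℝ) else 0)).rank
      = ∑ m ∈ (range (n + 1)).filter (fun m => fZ a n m ≠ 0), n.choose m := by
  classical
  have h1 : (Matrix.of (fun x y : Fin n → Bool =>
        if hammingDist x y = a then (1 : ℝ) else 0)).rank
      = (Matrix.diagonal (fun S : Fin n → Bool => (fZ a n (wt S) : ℝ))).rank := by
    rw [← Matrix.rank_mul_eq_left_of_isUnit_det (Hm n) _ isUnit_det_Hm, mul_Hm_eq,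
      Matrix.rank_mul_eq_right_of_isUnit_det (Hm n) _ isUnit_det_Hm]
  rw [h1, Matrix.rank_diagonal, ← countEq a]
  exact Fintype.card_congr (Equiv.subtypeEquivRight fun S => by
    simp [Int.cast_eq_zero])
end
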